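/- arXiv:1806.03543 — 2 statements merged into one kernel-verified Lean document; each statement's English description precedes it below -/
import Mathlib

section
/- Under the riskless-bond assumption, absence of strong model-independent arbitrage holds if and only if the pricing correspondence ρ is single-valued (ρ(m) is a singleton {ρ̂(m)} for every m ∈ 𝔐) and the induced map ρ̂ : 𝔐 → ℝ is linear and strictly positive, i.e. ρ̂(m) > 0 whenever m ≥ 0 pointwise and m ≠ 0. -/
open MeasureTheory Filter Topology

namespace Stmt0

/-- The space of traded claims: all finite linear combinations of the payoffs `φ i`. -/
def tradedClaims {n : ℕ} {I : Type*} (φ : I → (Fin n → ℝ) → ℝ) :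
    Set ((Fin n → ℝ) → ℝ) :=
  {m | ∃ a : I →₀ ℝ, m = a.sum fun i r => r • φ i}

/-- The pricing correspondence: the set of prices of all finite representations of `m`. -/
def priceSet {n : ℕ} {I : Type*} (φ : I → (Fin n → ℝ) → ℝ) (c : I → ℝ)
    (m : (Fin n → ℝ) → ℝ) : Set ℝ :=
  {x | ∃ a : I →₀ ℝ, m = (a.sum fun i r => r • φ i) ∧ x = a.sum fun i r => r * c i}

/-- Absence of strong model-independent arbitrage. -/
def NoStrongArb {n : ℕ} {I : Type*} (φ : I → (Fin n → ℝ) → ℝ) (c : I → ℝ) : Prop :=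
  (∀ m ∈ tradedClaims φ, (∀ ω, 0 ≤ m ω) → 0 ≤ sInf (priceSet φ c m)) ∧
  (∀ m ∈ tradedClaims φ, (∀ ω, 0 ≤ m ω) → m ≠ 0 → 0 < sInf (priceSet φ c m))

section Aux

variable {n : ℕ} {I : Type*} (φ : I → (Fin n → ℝ) → ℝ) (c : I → ℝ)

lemma sum_add_g (a b : I →₀ ℝ) :
    ((a + b).sum fun i r => r • φ i) = (a.sum fun i r => r • φ i) + (b.sum fun i r => r • φ i) :=
  Finsupp.sum_add_index' (fun i => zero_smul ℝ (φ i)) (fun i r s => add_smul r s (φ i))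

lemma sum_add_c (a b : I →₀ ℝ) :
    ((a + b).sum fun i r => r * c i) = (a.sum fun i r => r * c i) + (b.sum fun i r => r * c i) :=
  Finsupp.sum_add_index' (fun i => zero_mul (c i)) (fun i r s => add_mul r s (c i))

lemma sum_smul_g (t : ℝ) (a : I →₀ ℝ) :
    ((t • a).sum fun i r => r • φ i) = t • (a.sum fun i r => r • φ i) := by
  rw [Finsupp.sum_smul_index' (fun i => zero_smul ℝ (φ i)), Finsupp.smul_sum]
  simp [smul_smul]

lemma sum_smul_c (t : ℝ) (a : I →₀ ℝ) :
    ((t • a).sum fun i r => r * c i) = t * (a.sum fun i r => r * c i) := by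
  rw [Finsupp.sum_smul_index' (fun i => zero_mul (c i)), Finsupp.mul_sum]
  simp [mul_assoc]

/-- Under the riskless-bond assumption, every representation of the zero claim has price 0. -/
lemma rep_zero_price_zero
    (hbond : ∃ m₀ ∈ tradedClaims φ, (∀ ω, 0 < m₀ ω) ∧ 0 < sInf (priceSet φ c m₀))
    (a : I →₀ ℝ) (ha : (a.sum fun i r => r • φ i) = 0) :
    (a.sum fun i r => r * c i) = 0 := by
  by_contra hx
  set x : ℝ := a.sum fun i r => r * c i with hxdef
  obtain ⟨m₀, ⟨a₀, ha₀⟩, hpos, hinf⟩ := hbond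
  set p : ℝ := a₀.sum fun i r => r * c i with hpdef
  have hmem : ∀ t : ℝ, p + t * x ∈ priceSet φ c m₀ := by
    intro t
    refine ⟨a₀ + t • a, ?_, ?_⟩
    · rw [sum_add_g, sum_smul_g, ha, smul_zero, add_zero, ha₀]
    · rw [sum_add_c, sum_smul_c, ← hxdef, ← hpdef]
  have hnb : ¬ BddBelow (priceSet φ c m₀) := by
    rintro ⟨L, hL⟩
    have h1 := hL (hmem ((L - p - 1) / x))
    rw [div_mul_cancel₀ _ hx] at h1
    linarith
  rw [Real.sInf_of_not_bddBelow hnb] at hinf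
  exact lt_irrefl 0 hinf

/-- Under the riskless-bond assumption, any two representations of a claim have equal price. -/
lemma rep_price_unique
    (hbond : ∃ m₀ ∈ tradedClaims φ, (∀ ω, 0 < m₀ ω) ∧ 0 < sInf (priceSet φ c m₀))
    (a b : I →₀ ℝ) (hab : (a.sum fun i r => r • φ i) = b.sum fun i r => r • φ i) :
    (a.sum fun i r => r * c i) = b.sum fun i r => r * c i := by
  have h0 : ((a + (-1 : ℝ) • b).sum fun i r => r • φ i) = 0 := by
    rw [sum_add_g, sum_smul_g, hab, neg_one_smul]; abel
  have := rep_zero_price_zero φ c hbond _ h0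
  rw [sum_add_c, sum_smul_c] at this
  linarith

end Aux

/-- under the riskless-bond assumption, absence of strong model-independent
arbitrage holds iff the pricing correspondence is single-valued and the induced map is
linear and strictly positive. -/
theorem stmt0 (n : ℕ) (hn : 1 ≤ n) (I : Type*) (φ : I → (Fin n → ℝ) → ℝ) (c : I → ℝ)
    (hφ : ∀ i, Continuous (φ i))
    (hbond : ∃ m₀ ∈ tradedClaims φ, (∀ ω, 0 < m₀ ω) ∧ 0 < sInf (priceSet φ c m₀)) :
    NoStrongArb φ c ↔
      ∃ ρhat : ((Fin n → ℝ) → ℝ) → ℝ,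
        (∀ m ∈ tradedClaims φ, priceSet φ c m = {ρhat m}) ∧
        (∀ m ∈ tradedClaims φ, ∀ m' ∈ tradedClaims φ, ρhat (m + m') = ρhat m + ρhat m') ∧
        (∀ m ∈ tradedClaims φ, ∀ r : ℝ, ρhat (r • m) = r * ρhat m) ∧
        (∀ m ∈ tradedClaims φ, (∀ ω, 0 ≤ m ω) → m ≠ 0 → 0 < ρhat m) := by
  -- single-valuedness follows from hbond alone
  have hsingle : ∀ m ∈ tradedClaims φ, priceSet φ c m = {sInf (priceSet φ c m)} := by
    rintro m ⟨a, ha⟩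
    have heq : priceSet φ c m = {a.sum fun i r => r * c i} := by
      ext y
      constructor
      · rintro ⟨b, hb, rfl⟩
        exact rep_price_unique φ c hbond b a (hb ▸ ha ▸ rfl)
      · rintro rfl
        exact ⟨a, ha, rfl⟩
    rw [heq, csInf_singleton]
  set ρhat : ((Fin n → ℝ) → ℝ) → ℝ := fun m => sInf (priceSet φ c m) with hρ
  have hval : ∀ m ∈ tradedClaims φ, ∀ y ∈ priceSet φ c m, ρhat m = y := by
    intro m hm y hy
    rw [hsingle m hm] at hy
    exact hy.symm
  constructor
  · rintro ⟨h1, h2⟩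
    refine ⟨ρhat, hsingle, ?_, ?_, ?_⟩
    · rintro m ⟨a, ha⟩ m' ⟨b, hb⟩
      have hmem : (a.sum fun i r => r * c i) + (b.sum fun i r => r * c i)
          ∈ priceSet φ c (m + m') :=
        ⟨a + b, by rw [sum_add_g, ← ha, ← hb], (sum_add_c c a b).symm⟩
      rw [hval (m + m') ⟨a + b, by rw [sum_add_g, ← ha, ← hb]⟩ _ hmem,
        hval m ⟨a, ha⟩ _ ⟨a, ha, rfl⟩, hval m' ⟨b, hb⟩ _ ⟨b, hb, rfl⟩]
    · rintro m ⟨a, ha⟩ r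
      have hmemr : ((r • a).sum fun i r => r * c i) ∈ priceSet φ c (r • m) :=
        ⟨r • a, by rw [sum_smul_g, ← ha], rfl⟩
      rw [hval (r • m) ⟨r • a, by rw [sum_smul_g, ← ha]⟩ _ hmemr,
        hval m ⟨a, ha⟩ _ ⟨a, ha, rfl⟩, sum_smul_c]
    · intro m hm hge hne
      exact h2 m hm hge hne
  · rintro ⟨ρ', hsv, hadd, hsmul, hpos⟩
    have hval' : ∀ m ∈ tradedClaims φ, sInf (priceSet φ c m) = ρ' m := by
      intro m hm
      rw [hsv m hm, csInf_singleton]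
    have hzero : ρ' 0 = 0 := by
      have h0 : (0 : (Fin n → ℝ) → ℝ) ∈ tradedClaims φ :=
        ⟨0, by rw [Finsupp.sum_zero_index]⟩
      have := hadd 0 h0 0 h0
      rw [add_zero] at this
      linarith
    constructor
    · intro m hm hge
      rw [hval' m hm]
      by_cases hne : m = 0
      · rw [hne, hzero]
      · exact le_of_lt (hpos m hm hge hne)
    · intro m hm hge hne
      rw [hval' m hm]
      exact hpos m hm hge hne

end Stmt0
end

section
/- Let μ be a Borel probability measure on ℝ₊ and g : ℝ₊ → ℝ a convex function with g(x)/x → ∞ as x → ∞ and ∫ g dμ < ∞. Then there exist a strictly increasing sequence (K_n)_{n≥1} of positive reals diverging to infinity with g(K₁) < ∞, and nonnegative reals (α_n)_{n≥1}, such that: (i) g(x) ≤ g(K₁) + Σ_{n≥1} α_n (x − K_n)₊ for all x ∈ ℝ₊; (ii) Σ_{n≥1} α_n = ∞; and (iii) Σ_{n≥1} α_n ∫_{ℝ₊} (x − K_n)₊ μ(dx) < ∞. -/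
open MeasureTheory Filter Topology

namespace Stmt9

lemma slope_mono' {g : ℝ → ℝ} (hconv : ConvexOn ℝ (Set.Ici (0:ℝ)) g)
    {x y u v : ℝ} (hx : 0 ≤ x) (hxy : x < y) (hxu : x ≤ u) (huv : u < v) (hyv : y ≤ v) :
    (g y - g x) / (y - x) ≤ (g v - g u) / (v - u) := by
  have hy : 0 ≤ y := hx.trans hxy.le
  have hu : 0 ≤ u := hx.trans hxu
  have hv : 0 ≤ v := hu.trans huv.le
  have hxv : x < v := lt_of_le_of_lt hxu huv
  have h1 : (g y - g x) / (y - x) ≤ (g v - g x) / (v - x) :=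
    hconv.secant_mono hx hy hv hxy.ne' hxv.ne' hyv
  have h2 : (g x - g v) / (x - v) ≤ (g u - g v) / (u - v) :=
    hconv.secant_mono hv hx hu hxv.ne huv.ne hxu
  have e1 : (g x - g v) / (x - v) = (g v - g x) / (v - x) := by
    rw [← neg_div_neg_eq, neg_sub, neg_sub]
  have e2 : (g u - g v) / (u - v) = (g v - g u) / (v - u) := by
    rw [← neg_div_neg_eq, neg_sub, neg_sub]
  rw [e1, e2] at h2
  exact h1.trans h2

noncomputable def seqK (g : ℝ → ℝ) (a : ℝ) : ℕ → ℝ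
  | 0 => a
  | n + 1 => seqK g a n + min 1 (1 / (g (seqK g a n + 2) - g (seqK g a n + 1)))

noncomputable def slopeC (g : ℝ → ℝ) (a : ℝ) (n : ℕ) : ℝ :=
  (g (seqK g a (n + 1)) - g (seqK g a n)) / (seqK g a (n + 1) - seqK g a n)

noncomputable def wA (g : ℝ → ℝ) (a : ℝ) : ℕ → ℝ
  | 0 => slopeC g a 0
  | n + 1 => slopeC g a (n + 1) - slopeC g a n

variable {g : ℝ → ℝ} {a : ℝ}

lemma hg_incr (hconv : ConvexOn ℝ (Set.Ici (0:ℝ)) g) (ha1 : 1 ≤ a)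
    (ha2 : a + g 0 ≤ g a) {u v : ℝ} (hu : a ≤ u) (huv : u < v) :
    1 ≤ (g v - g u) / (v - u) := by
  have h0a : (0:ℝ) < a := lt_of_lt_of_le one_pos ha1
  have hav : a ≤ v := hu.trans huv.le
  have h1 : (g a - g 0) / (a - 0) ≤ (g v - g u) / (v - u) :=
    slope_mono' hconv le_rfl h0a (h0a.le.trans hu) huv hav
  have h2 : (1:ℝ) ≤ (g a - g 0) / (a - 0) := by
    rw [sub_zero, le_div_iff₀ h0a]; linarith
  exact h2.trans h1

/-- increments: `g u + (v - u) ≤ g v` for `a ≤ u ≤ v`. -/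
lemma hg_incr' (hconv : ConvexOn ℝ (Set.Ici (0:ℝ)) g) (ha1 : 1 ≤ a)
    (ha2 : a + g 0 ≤ g a) {u v : ℝ} (hu : a ≤ u) (huv : u ≤ v) :
    g u + (v - u) ≤ g v := by
  rcases eq_or_lt_of_le huv with rfl | h
  · simp
  · have := hg_incr hconv ha1 ha2 hu h
    rw [le_div_iff₀ (by linarith)] at this
    linarith

lemma seqK_ge (hconv : ConvexOn ℝ (Set.Ici (0:ℝ)) g) (ha1 : 1 ≤ a)
    (ha2 : a + g 0 ≤ g a) : ∀ n, a ≤ seqK g a n := by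
  intro n
  induction n with
  | zero => exact le_rfl
  | succ n ih =>
      have hφ : (1:ℝ) ≤ g (seqK g a n + 2) - g (seqK g a n + 1) := by
        have := hg_incr' hconv ha1 ha2 (u := seqK g a n + 1) (v := seqK g a n + 2)
          (by linarith) (by linarith)
        linarith
      have : (0:ℝ) ≤ min 1 (1 / (g (seqK g a n + 2) - g (seqK g a n + 1))) :=
        le_min zero_le_one (by positivity)
      show a ≤ seqK g a n + _
      linarith

lemma seqK_phi (hconv : ConvexOn ℝ (Set.Ici (0:ℝ)) g) (ha1 : 1 ≤ a)
    (ha2 : a + g 0 ≤ g a) (n : ℕ) : (1:ℝ) ≤ g (seqK g a n + 2) - g (seqK g a n + 1) := by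
  have h := seqK_ge hconv ha1 ha2 n
  have := hg_incr' hconv ha1 ha2 (u := seqK g a n + 1) (v := seqK g a n + 2)
    (by linarith) (by linarith)
  linarith

lemma seqK_lt (hconv : ConvexOn ℝ (Set.Ici (0:ℝ)) g) (ha1 : 1 ≤ a)
    (ha2 : a + g 0 ≤ g a) (n : ℕ) : seqK g a n < seqK g a (n + 1) := by
  have hφ := seqK_phi hconv ha1 ha2 n
  have : (0:ℝ) < min 1 (1 / (g (seqK g a n + 2) - g (seqK g a n + 1))) :=
    lt_min one_pos (by positivity)
  show seqK g a n < seqK g a n + _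
  linarith

lemma seqK_le (n : ℕ) : seqK g a (n + 1) ≤ seqK g a n + 1 := by
  have : min 1 (1 / (g (seqK g a n + 2) - g (seqK g a n + 1))) ≤ 1 := min_le_left _ _
  show seqK g a n + _ ≤ _
  linarith

lemma seqK_mul (hconv : ConvexOn ℝ (Set.Ici (0:ℝ)) g) (ha1 : 1 ≤ a)
    (ha2 : a + g 0 ≤ g a) (n : ℕ) :
    (seqK g a (n + 1) - seqK g a n) * (g (seqK g a n + 2) - g (seqK g a n + 1)) ≤ 1 := by
  have hφ := seqK_phi hconv ha1 ha2 n
  have hφpos : (0:ℝ) < g (seqK g a n + 2) - g (seqK g a n + 1) := by linarith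
  have h2 : min 1 (1 / (g (seqK g a n + 2) - g (seqK g a n + 1))) ≤
      1 / (g (seqK g a n + 2) - g (seqK g a n + 1)) := min_le_right _ _
  have e : seqK g a (n + 1) - seqK g a n
      = min 1 (1 / (g (seqK g a n + 2) - g (seqK g a n + 1))) := by
    show seqK g a n + _ - seqK g a n = _
    ring
  rw [e]
  calc min 1 (1 / (g (seqK g a n + 2) - g (seqK g a n + 1)))
        * (g (seqK g a n + 2) - g (seqK g a n + 1))
      ≤ (1 / (g (seqK g a n + 2) - g (seqK g a n + 1)))
        * (g (seqK g a n + 2) - g (seqK g a n + 1)) :=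
        mul_le_mul_of_nonneg_right h2 hφpos.le
    _ = 1 := by field_simp

lemma seqK_strictMono (hconv : ConvexOn ℝ (Set.Ici (0:ℝ)) g) (ha1 : 1 ≤ a)
    (ha2 : a + g 0 ≤ g a) : StrictMono (seqK g a) :=
  strictMono_nat_of_lt_succ (seqK_lt hconv ha1 ha2)

lemma seqK_tendsto (hconv : ConvexOn ℝ (Set.Ici (0:ℝ)) g) (ha1 : 1 ≤ a)
    (ha2 : a + g 0 ≤ g a) : Tendsto (seqK g a) atTop atTop := by
  have hmono : Monotone (seqK g a) := (seqK_strictMono hconv ha1 ha2).monotone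
  refine tendsto_atTop_atTop_of_monotone' hmono ?_
  rintro ⟨M, hM⟩
  have hMmem : ∀ n, seqK g a n ≤ M := fun n => hM (Set.mem_range_self n)
  have haM : a ≤ M := le_trans (seqK_ge hconv ha1 ha2 0) (hMmem 0)
  set φM : ℝ := g (M + 2) - g (M + 1) with hφM
  have hφMpos : (0:ℝ) < φM := by
    have := hg_incr' hconv ha1 ha2 (u := M + 1) (v := M + 2) (by linarith) (by linarith)
    simp only [hφM]; linarith
  set d : ℝ := min 1 (1 / φM) with hd
  have hdpos : 0 < d := lt_min one_pos (by positivity)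
  have hstep : ∀ n, seqK g a n + d ≤ seqK g a (n + 1) := by
    intro n
    have hφle : g (seqK g a n + 2) - g (seqK g a n + 1) ≤ φM := by
      have := slope_mono' hconv (x := seqK g a n + 1) (y := seqK g a n + 2)
        (u := M + 1) (v := M + 2)
        (by have := seqK_ge hconv ha1 ha2 n; linarith)
        (by linarith) (by have := hMmem n; linarith) (by linarith)
        (by have := hMmem n; linarith)
      have e1 : seqK g a n + 2 - (seqK g a n + 1) = (1:ℝ) := by ring
      have e2 : M + 2 - (M + 1) = (1:ℝ) := by ring
      rw [e1, e2, div_one, div_one] at this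
      exact this
    have hφpos := seqK_phi hconv ha1 ha2 n
    have : d ≤ min 1 (1 / (g (seqK g a n + 2) - g (seqK g a n + 1))) := by
      refine le_min (min_le_left _ _) ?_
      refine le_trans (min_le_right _ _) ?_
      exact one_div_le_one_div_of_le (by linarith) hφle
    show seqK g a n + d ≤ seqK g a n + _
    linarith
  have hlin : ∀ n, a + n * d ≤ seqK g a n := by
    intro n
    induction n with
    | zero => simpa using (seqK_ge hconv ha1 ha2 0).trans_eq rfl
    | succ n ih =>
        have := hstep n
        push_cast
        nlinarith
  obtain ⟨n, hn⟩ := exists_nat_gt ((M - a) / d)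
  have h1 : (M - a) / d * d < n * d := mul_lt_mul_of_pos_right hn hdpos
  rw [div_mul_cancel₀ _ hdpos.ne'] at h1
  have := hlin n
  have := hMmem n
  linarith

lemma slopeC_ge_one (hconv : ConvexOn ℝ (Set.Ici (0:ℝ)) g) (ha1 : 1 ≤ a)
    (ha2 : a + g 0 ≤ g a) (n : ℕ) : 1 ≤ slopeC g a n :=
  hg_incr hconv ha1 ha2 (seqK_ge hconv ha1 ha2 n) (seqK_lt hconv ha1 ha2 n)

lemma slopeC_mono (hconv : ConvexOn ℝ (Set.Ici (0:ℝ)) g) (ha1 : 1 ≤ a)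
    (ha2 : a + g 0 ≤ g a) (n : ℕ) : slopeC g a n ≤ slopeC g a (n + 1) := by
  have h0 : (0:ℝ) < a := lt_of_lt_of_le one_pos ha1
  exact slope_mono' hconv (le_trans h0.le (seqK_ge hconv ha1 ha2 n))
    (seqK_lt hconv ha1 ha2 n) (seqK_lt hconv ha1 ha2 n).le
    (seqK_lt hconv ha1 ha2 (n+1)) (seqK_lt hconv ha1 ha2 (n+1)).le

lemma slopeC_mul (hconv : ConvexOn ℝ (Set.Ici (0:ℝ)) g) (ha1 : 1 ≤ a)
    (ha2 : a + g 0 ≤ g a) (n : ℕ) :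
    slopeC g a n * (seqK g a (n + 1) - seqK g a n) ≤ 1 := by
  have h0 : (0:ℝ) < a := lt_of_lt_of_le one_pos ha1
  have hKa := seqK_ge hconv ha1 ha2 n
  have hlt := seqK_lt hconv ha1 ha2 n
  have hle := seqK_le (g := g) (a := a) n
  -- slopeC n ≤ φ n
  have hφ : slopeC g a n ≤ g (seqK g a n + 2) - g (seqK g a n + 1) := by
    have := slope_mono' hconv (x := seqK g a n) (y := seqK g a (n+1))
      (u := seqK g a n + 1) (v := seqK g a n + 2)
      (by linarith) hlt (by linarith) (by linarith) (by linarith)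
    have e : seqK g a n + 2 - (seqK g a n + 1) = (1:ℝ) := by ring
    rw [e, div_one] at this
    exact this
  have hmul := seqK_mul hconv ha1 ha2 n
  have hδ : 0 ≤ seqK g a (n+1) - seqK g a n := by linarith
  calc slopeC g a n * (seqK g a (n + 1) - seqK g a n)
      ≤ (g (seqK g a n + 2) - g (seqK g a n + 1)) * (seqK g a (n + 1) - seqK g a n) :=
        mul_le_mul_of_nonneg_right hφ hδ
    _ ≤ 1 := by linarith [hmul]

lemma slopeC_spec (hconv : ConvexOn ℝ (Set.Ici (0:ℝ)) g) (ha1 : 1 ≤ a)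
    (ha2 : a + g 0 ≤ g a) (n : ℕ) :
    slopeC g a n * (seqK g a (n + 1) - seqK g a n)
      = g (seqK g a (n + 1)) - g (seqK g a n) := by
  have hlt := seqK_lt hconv ha1 ha2 n
  exact div_mul_cancel₀ _ (by linarith)

lemma wA_nonneg (hconv : ConvexOn ℝ (Set.Ici (0:ℝ)) g) (ha1 : 1 ≤ a)
    (ha2 : a + g 0 ≤ g a) (n : ℕ) : 0 ≤ wA g a n := by
  cases n with
  | zero =>
      have := slopeC_ge_one hconv ha1 ha2 0
      show (0:ℝ) ≤ slopeC g a 0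
      linarith
  | succ n =>
      have := slopeC_mono hconv ha1 ha2 n
      show (0:ℝ) ≤ slopeC g a (n+1) - slopeC g a n
      linarith

lemma wA_sum (hconv : ConvexOn ℝ (Set.Ici (0:ℝ)) g) (ha1 : 1 ≤ a)
    (ha2 : a + g 0 ≤ g a) (N : ℕ) :
    ∑ k ∈ Finset.range (N + 1), wA g a k = slopeC g a N := by
  induction N with
  | zero => simp [wA]
  | succ N ih =>
      rw [Finset.sum_range_succ, ih]
      show slopeC g a N + (slopeC g a (N+1) - slopeC g a N) = _
      ring

/-- closed form of the partial sums of the call payoffs -/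
lemma wA_payoff_sum (hconv : ConvexOn ℝ (Set.Ici (0:ℝ)) g) (ha1 : 1 ≤ a)
    (ha2 : a + g 0 ≤ g a) (N : ℕ) {x : ℝ} (hx : seqK g a N ≤ x) :
    ∑ k ∈ Finset.range (N + 1), wA g a k * max (x - seqK g a k) 0
      = g (seqK g a N) - g a + slopeC g a N * (x - seqK g a N) := by
  induction N with
  | zero =>
      have : max (x - seqK g a 0) 0 = x - seqK g a 0 :=
        max_eq_left (by linarith)
      rw [Finset.sum_range_one]
      show wA g a 0 * max (x - seqK g a 0) 0 = _
      rw [this]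
      show slopeC g a 0 * _ = _
      have e0 : seqK g a 0 = a := rfl
      rw [e0]; ring
  | succ N ih =>
      have hxN : seqK g a N ≤ x := le_trans (seqK_lt hconv ha1 ha2 N).le hx
      rw [Finset.sum_range_succ, ih hxN]
      have hmax : max (x - seqK g a (N+1)) 0 = x - seqK g a (N+1) :=
        max_eq_left (by linarith)
      rw [hmax]
      have hspec := slopeC_spec hconv ha1 ha2 N
      show _ + (slopeC g a (N+1) - slopeC g a N) * _ = _
      nlinarith [hspec]

lemma chord_ge {g : ℝ → ℝ} {a : ℝ} (hconv : ConvexOn ℝ (Set.Ici (0:ℝ)) g) (ha1 : 1 ≤ a)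
    (ha2 : a + g 0 ≤ g a) (N : ℕ) {x : ℝ} (h1 : seqK g a N ≤ x) (h2 : x ≤ seqK g a (N + 1)) :
    g x ≤ g (seqK g a N) + slopeC g a N * (x - seqK g a N) := by
  rcases eq_or_lt_of_le h1 with rfl | h
  · simp
  · have h0 : (0:ℝ) < a := lt_of_lt_of_le one_pos ha1
    have hs := slope_mono' hconv (x := seqK g a N) (y := x) (u := seqK g a N)
      (v := seqK g a (N + 1)) (le_trans h0.le (seqK_ge hconv ha1 ha2 N)) h le_rfl
      (seqK_lt hconv ha1 ha2 N) h2
    have := (div_le_iff₀ (by linarith : (0:ℝ) < x - seqK g a N)).mp hs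
    show g x ≤ g (seqK g a N) + (g (seqK g a (N+1)) - g (seqK g a N)) /
      (seqK g a (N+1) - seqK g a N) * (x - seqK g a N)
    nlinarith [this]

lemma chord_le {g : ℝ → ℝ} {a : ℝ} (hconv : ConvexOn ℝ (Set.Ici (0:ℝ)) g) (ha1 : 1 ≤ a)
    (ha2 : a + g 0 ≤ g a) (N : ℕ) {x : ℝ} (h1 : seqK g a N ≤ x) (h2 : x ≤ seqK g a (N + 1)) :
    g (seqK g a N) + slopeC g a N * (x - seqK g a N) ≤ g x + 1 := by
  have hmono : g (seqK g a N) ≤ g x := by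
    have := hg_incr' hconv ha1 ha2 (seqK_ge hconv ha1 ha2 N) h1
    linarith
  have hcpos : (0:ℝ) ≤ slopeC g a N := by
    have := slopeC_ge_one hconv ha1 ha2 N; linarith
  have hmul : slopeC g a N * (x - seqK g a N)
      ≤ slopeC g a N * (seqK g a (N + 1) - seqK g a N) :=
    mul_le_mul_of_nonneg_left (by linarith) hcpos
  have := slopeC_mul hconv ha1 ha2 N
  linarith

/-- for a Borel probability measure `μ` on `ℝ₊` and a convex superlinear
`μ`-integrable function `g`, there are strikes `K_n ↑ ∞` and nonnegative weights `α_n`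
with `g(x) ≤ g(K₁) + Σ α_n (x − K_n)₊`, `Σ α_n = ∞`, and
`Σ α_n ∫ (x − K_n)₊ dμ < ∞`. -/
theorem stmt9 (μ : Measure ℝ) (hμ : IsProbabilityMeasure μ)
    (hsupp : μ {x : ℝ | x < 0} = 0)
    (g : ℝ → ℝ) (hconv : ConvexOn ℝ (Set.Ici (0 : ℝ)) g)
    (hsl : Tendsto (fun x => g x / x) atTop atTop)
    (hint : Integrable g μ) :
    ∃ (K α : ℕ → ℝ),
      StrictMono K ∧ (∀ k, 0 < K k) ∧ Tendsto K atTop atTop ∧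
      (∀ k, 0 ≤ α k) ∧
      (∀ x : ℝ, 0 ≤ x → g x ≤ g (K 0) + ∑' k, α k * max (x - K k) 0) ∧
      ¬ Summable α ∧
      Summable (fun k => α k * ∫ x, max (x - K k) 0 ∂μ) := by
  classical
  -- choose the anchor point a
  obtain ⟨a, ha1, ha2'⟩ : ∃ a : ℝ, 1 ≤ a ∧ 1 + |g 0| ≤ g a / a := by
    obtain ⟨a, ha⟩ := ((hsl.eventually_ge_atTop (1 + |g 0|)).and (eventually_ge_atTop 1)).exists
    exact ⟨a, ha.2, ha.1⟩
  have h0a : (0:ℝ) < a := lt_of_lt_of_le one_pos ha1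
  have ha2 : a + g 0 ≤ g a := by
    rw [le_div_iff₀ h0a] at ha2'
    have h1 : |g 0| ≥ g 0 := le_abs_self _
    nlinarith [abs_nonneg (g 0)]
  set K : ℕ → ℝ := seqK g a with hK
  set c : ℕ → ℝ := slopeC g a with hc
  set α : ℕ → ℝ := wA g a with hα
  have hKs : StrictMono K := seqK_strictMono hconv ha1 ha2
  have hKge : ∀ n, a ≤ K n := seqK_ge hconv ha1 ha2
  have hKpos : ∀ k, 0 < K k := fun k => lt_of_lt_of_le h0a (hKge k)
  have hKtop : Tendsto K atTop atTop := seqK_tendsto hconv ha1 ha2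
  have hαnn : ∀ k, 0 ≤ α k := wA_nonneg hconv ha1 ha2
  have hK0 : K 0 = a := rfl
  -- locator
  have hloc : ∀ x : ℝ, a ≤ x → ∃ N, K N ≤ x ∧ x < K (N + 1) := by
    intro x hx
    have hne : ∃ m, x < K m := (hKtop.eventually_gt_atTop x).exists
    have h0 : ¬ x < K 0 := by rw [hK0]; linarith
    have hfind := Nat.find_spec hne
    rcases Nat.exists_eq_succ_of_ne_zero (by
      intro h; rw [h] at hfind; exact h0 hfind : Nat.find hne ≠ 0) with ⟨N, hN⟩
    refine ⟨N, ?_, ?_⟩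
    · have := Nat.find_min hne (by rw [hN]; exact Nat.lt_succ_self N)
      linarith [not_lt.mp this]
    · have h2 := hfind; rw [hN] at h2; exact h2
  -- vanishing of terms beyond the active range
  have hzero : ∀ (x : ℝ) (k : ℕ), x < K k → α k * max (x - K k) 0 = 0 := by
    intro x k hk
    rw [max_eq_right (by linarith), mul_zero]
  have hsupport : ∀ (x : ℝ) (N : ℕ), x < K (N + 1) →
      ∀ k ∉ Finset.range (N + 1), α k * max (x - K k) 0 = 0 := by
    intro x N hx k hk
    have hk' : N + 1 ≤ k := by simpa [Finset.mem_range, not_lt] using hk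
    exact hzero x k (lt_of_lt_of_le hx (hKs.monotone hk'))
  refine ⟨K, α, hKs, hKpos, hKtop, hαnn, ?_, ?_, ?_⟩
  · -- the domination inequality
    intro x hx0
    by_cases hxa : x < a
    · have hts : ∑' k, α k * max (x - K k) 0 = 0 := by
        rw [tsum_congr (fun k => hzero x k (lt_of_lt_of_le hxa (hKge k)))]
        exact tsum_zero
      rw [hts, hK0, add_zero]
      -- g x ≤ g a for 0 ≤ x < a
      rcases eq_or_lt_of_le hx0 with rfl | hx0'
      · linarith
      · have hs := hconv.secant_mono (a := 0) (x := x) (y := a)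
          Set.self_mem_Ici (Set.mem_Ici.mpr hx0) (Set.mem_Ici.mpr h0a.le)
          hx0'.ne' h0a.ne' hxa.le
        rw [sub_zero, sub_zero] at hs
        have hsl0 : (0:ℝ) ≤ (g a - g 0) / a := div_nonneg (by linarith) h0a.le
        have t2 : g x - g 0 ≤ (g a - g 0) / a * x := (div_le_iff₀ hx0').mp hs
        have t3 : (g a - g 0) / a * x ≤ (g a - g 0) / a * a :=
          mul_le_mul_of_nonneg_left hxa.le hsl0
        have t4 : (g a - g 0) / a * a = g a - g 0 := div_mul_cancel₀ _ h0a.ne'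
        linarith
    · push_neg at hxa
      obtain ⟨N, hN1, hN2⟩ := hloc x hxa
      have hts : ∑' k, α k * max (x - K k) 0
          = g (K N) - g a + c N * (x - K N) := by
        rw [tsum_eq_sum (hsupport x N hN2)]
        exact wA_payoff_sum hconv ha1 ha2 N hN1
      rw [hts, hK0]
      have := chord_ge hconv ha1 ha2 N hN1 hN2.le
      linarith
  · -- non-summability
    intro hs
    have hub : ∀ N, c N ≤ ∑' k, α k := by
      intro N
      have h1 := Summable.sum_le_tsum (Finset.range (N+1)) (fun i _ => hαnn i) hs
      have h2 : ∑ k ∈ Finset.range (N+1), α k = c N := wA_sum hconv ha1 ha2 N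
      linarith
    have hle : ∀ N, g (K N) / K N + -|g 0| ≤ c N := by
      intro N
      have hsm := slope_mono' hconv (x := 0) (y := K N) (u := K N) (v := K (N + 1))
        le_rfl (hKpos N) (hKpos N).le (hKs (Nat.lt_succ_self N)) (hKs (Nat.lt_succ_self N)).le
      rw [sub_zero] at hsm
      have hgd : g 0 / K N ≤ |g 0| := by
        rw [div_le_iff₀ (hKpos N)]
        nlinarith [le_abs_self (g 0), abs_nonneg (g 0), hKge N]
      have hsplit : (g (K N) - g 0) / K N = g (K N) / K N - g 0 / K N := sub_div _ _ _
      have hcN : (g (K N) - g 0) / K N ≤ c N := hsm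
      linarith
    have l1 : Tendsto (fun N => g (K N) / K N) atTop atTop := hsl.comp hKtop
    have l3 : Tendsto (fun N => g (K N) / K N + -|g 0|) atTop atTop :=
      tendsto_atTop_add_const_right _ _ l1
    have l4 : Tendsto c atTop atTop := tendsto_atTop_mono hle l3
    obtain ⟨N, hN⟩ := (l4.eventually_ge_atTop ((∑' k, α k) + 1)).exists
    linarith [hub N]
  · -- summability of the weighted call prices
    have hIntCall : ∀ k, Integrable (fun x => max (x - K k) 0) μ := by
      intro k
      have hbd1 : Integrable (fun x => |g x| + (|g a| + a)) μ :=
        hint.abs.add (integrable_const _)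
      refine Integrable.mono hbd1
        (((continuous_id.sub continuous_const).max continuous_const).aestronglyMeasurable) ?_
      refine ae_of_all _ fun x => ?_
      have hnn : (0:ℝ) ≤ max (x - K k) 0 := le_max_right _ _
      rw [Real.norm_of_nonneg hnn, Real.norm_of_nonneg
        (by positivity : (0:ℝ) ≤ |g x| + (|g a| + a))]
      by_cases hxa : x ≤ a
      · have : x - K k ≤ 0 := by linarith [hKge k]
        rw [max_eq_right this]; positivity
      · push_neg at hxa
        have := hg_incr' hconv ha1 ha2 (le_refl a) hxa.le
        have h1 : x - K k ≤ |g x| + (|g a| + a) := by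
          have := le_abs_self (g x)
          have := neg_abs_le (g a)
          have := hKpos k
          linarith
        exact max_le h1 (by positivity)
    have hJnn : ∀ k, 0 ≤ ∫ x, max (x - K k) 0 ∂μ :=
      fun k => integral_nonneg (fun x => le_max_right _ _)
    refine summable_of_sum_range_le (c := (∫ x, |g x| ∂μ) + (1 + |g a|))
      (fun k => mul_nonneg (hαnn k) (hJnn k)) ?_
    intro N
    have e1 : ∑ k ∈ Finset.range N, α k * ∫ x, max (x - K k) 0 ∂μ
        = ∫ x, (∑ k ∈ Finset.range N, α k * max (x - K k) 0) ∂μ := by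
      rw [integral_finset_sum _ (fun k _ => (hIntCall k).const_mul (α k))]
      exact Finset.sum_congr rfl fun k _ => (integral_const_mul _ _).symm
    rw [e1]
    have hbd : ∀ x : ℝ, (∑ k ∈ Finset.range N, α k * max (x - K k) 0)
        ≤ |g x| + (1 + |g a|) := by
      intro x
      by_cases hxa : x < a
      · rw [Finset.sum_eq_zero (fun k _ => hzero x k (lt_of_lt_of_le hxa (hKge k)))]
        positivity
      · push_neg at hxa
        obtain ⟨M, hM1, hM2⟩ := hloc x hxa
        have hsub : ∑ k ∈ Finset.range N, α k * max (x - K k) 0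
            ≤ ∑ k ∈ Finset.range (max N (M + 1)), α k * max (x - K k) 0 :=
          Finset.sum_le_sum_of_subset_of_nonneg
            (Finset.range_subset_range.mpr (le_max_left _ _))
            (fun k _ _ => mul_nonneg (hαnn k) (le_max_right _ _))
        have heq : ∑ k ∈ Finset.range (max N (M + 1)), α k * max (x - K k) 0
            = ∑ k ∈ Finset.range (M + 1), α k * max (x - K k) 0 :=
          (Finset.sum_subset (Finset.range_subset_range.mpr (le_max_right _ _))
            (fun k _ hk => hsupport x M hM2 k hk)).symm
        have hcf := wA_payoff_sum hconv ha1 ha2 M hM1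
        have hch := chord_le hconv ha1 ha2 M hM1 hM2.le
        have habs1 : g x ≤ |g x| := le_abs_self _
        have habs2 : -(|g a|) ≤ g a := neg_abs_le _
        calc ∑ k ∈ Finset.range N, α k * max (x - K k) 0
            ≤ ∑ k ∈ Finset.range (M + 1), α k * max (x - K k) 0 := by rw [← heq]; exact hsub
          _ = g (K M) - g a + c M * (x - K M) := hcf
          _ ≤ |g x| + (1 + |g a|) := by linarith
    have hintsum : Integrable (fun x => ∑ k ∈ Finset.range N, α k * max (x - K k) 0) μ :=
      integrable_finset_sum _ (fun k _ => (hIntCall k).const_mul (α k))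
    have hintbd : Integrable (fun x => |g x| + (1 + |g a|)) μ :=
      hint.abs.add (integrable_const _)
    calc ∫ x, (∑ k ∈ Finset.range N, α k * max (x - K k) 0) ∂μ
        ≤ ∫ x, (|g x| + (1 + |g a|)) ∂μ := integral_mono hintsum hintbd hbd
      _ = (∫ x, |g x| ∂μ) + (1 + |g a|) := by
          rw [integral_add hint.abs (integrable_const _), integral_const]
          simp [measure_univ]


end Stmt9
end
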